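/- Let (C, Δ, ε) be a semicomonoid in a semiunital semimonoidal category (V, •, I; ω) and let J = I•−. Define natural transformations Δ̂ with components Δ̂_X = γ_{X,C,C}^{-1}∘(X•Δ) : X•C → (X•C)•C and θ̂ with components θ̂_X = ℘_X∘(X•ε) : X•C → X•I → I•X. Then (−•C, Δ̂, ω, θ̂; J) is a J-comonad on V. -/

import Mathlib

/-!
Each law of the `J`-comonad `− • C` is the image under `X • −` of the corresponding law of the
semicomonoid `(C, Δ, ε)`, transported along the associator. Coassociativity of `Δ̂` reduces to
that of `Δ` through the inverse pentagon. For the semicounit laws, the axioms `ω_left`,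
`ω_right` and `ℓ_assoc` say that `X • ω_Y` and `X • (ℓ_Y ∘ ω_Y)` agree with `ω_X • Y` and
`ℓ_{X•Y} ∘ ω_{X•Y}` up to associators, which is exactly what is needed.
-/

open CategoryTheory

universe v u

/-- A semiunital semimonoidal category structure on a category `V`:
a bifunctor `t` (written `•` in the paper) with associator `γ` satisfying the
pentagon coherence, a semiunit object `I` with a natural transformation
`ω : X ⟶ I • X` and natural isomorphisms `ℓ : I • X ≅ X • I` (with inverse
`℘ = ℓ.inv`) such that `ℓ_I = ℘_I`, `ℓ` is compatible with the associator, and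
`ω_{X•Y}` coincides, up to the associator isomorphisms, with both `ω_X • Y`
and `X • ω_Y`. -/
structure SSM (V : Type u) [Category.{v} V] where
  /-- the tensor (semimonoidal) product on objects -/
  t : V → V → V
  /-- the tensor product on morphisms -/
  tmap : ∀ {X X' Y Y' : V}, (X ⟶ X') → (Y ⟶ Y') → (t X Y ⟶ t X' Y')
  tmap_id : ∀ X Y : V, tmap (𝟙 X) (𝟙 Y) = 𝟙 (t X Y)
  tmap_comp : ∀ {X X' X'' Y Y' Y'' : V} (f : X ⟶ X') (f' : X' ⟶ X'')
    (g : Y ⟶ Y') (g' : Y' ⟶ Y''),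
    tmap (f ≫ f') (g ≫ g') = tmap f g ≫ tmap f' g'
  /-- the associator -/
  γ : ∀ X Y Z : V, t (t X Y) Z ≅ t X (t Y Z)
  γ_nat : ∀ {X X' Y Y' Z Z' : V} (f : X ⟶ X') (g : Y ⟶ Y') (h : Z ⟶ Z'),
    tmap (tmap f g) h ≫ (γ X' Y' Z').hom = (γ X Y Z).hom ≫ tmap f (tmap g h)
  pentagon : ∀ W X Y Z : V,
    tmap (γ W X Y).hom (𝟙 Z) ≫ (γ W (t X Y) Z).hom ≫ tmap (𝟙 W) (γ X Y Z).hom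
      = (γ (t W X) Y Z).hom ≫ (γ W X (t Y Z)).hom
  /-- the semiunit object -/
  I : V
  /-- the semiunit natural transformation `ω_X : X ⟶ I • X` -/
  ω : ∀ X : V, X ⟶ t I X
  ω_nat : ∀ {X Y : V} (f : X ⟶ Y), f ≫ ω Y = ω X ≫ tmap (𝟙 I) f
  /-- the natural isomorphism `ℓ_X : I • X ≅ X • I` (with inverse `℘_X`) -/
  ℓ : ∀ X : V, t I X ≅ t X I
  ℓ_nat : ∀ {X Y : V} (f : X ⟶ Y), tmap (𝟙 I) f ≫ (ℓ Y).hom = (ℓ X).hom ≫ tmap f (𝟙 I)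
  ℓ_I : (ℓ I).hom = (ℓ I).inv
  ℓ_assoc : ∀ X Y : V,
    (γ I X Y).hom ≫ (ℓ (t X Y)).hom ≫ (γ X Y I).hom
      = tmap (ℓ X).hom (𝟙 Y) ≫ (γ X I Y).hom ≫ tmap (𝟙 X) (ℓ Y).hom
  ω_left : ∀ X Y : V, tmap (ω X) (𝟙 Y) ≫ (γ I X Y).hom = ω (t X Y)
  ω_right : ∀ X Y : V,
    tmap (𝟙 X) (ω Y) ≫ (γ X I Y).inv ≫ tmap (ℓ X).inv (𝟙 Y) ≫ (γ I X Y).hom = ω (t X Y)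

variable {V : Type u} [Category.{v} V]

/-- `Δ̂_X = γ_{X,C,C}⁻¹ ∘ (X • Δ)`. -/
def dhat (S : SSM V) {C : V} (Δ : C ⟶ S.t C C) (X : V) : S.t X C ⟶ S.t (S.t X C) C :=
  S.tmap (𝟙 X) Δ ≫ (S.γ X C C).inv

/-- `θ̂_X = ℘_X ∘ (X • ε)`. -/
def that (S : SSM V) {C : V} (ε : C ⟶ S.I) (X : V) : S.t X C ⟶ S.t S.I X :=
  S.tmap (𝟙 X) ε ≫ (S.ℓ X).inv

namespace SSM

variable (S : SSM V)

lemma tmap_comp_tmap {X X' X'' Y Y' Y'' : V} (f : X ⟶ X') (f' : X' ⟶ X'')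
    (g : Y ⟶ Y') (g' : Y' ⟶ Y'') :
    S.tmap f g ≫ S.tmap f' g' = S.tmap (f ≫ f') (g ≫ g') :=
  (S.tmap_comp f f' g g').symm

lemma tmap_comp_tmap_assoc {X X' X'' Y Y' Y'' W : V} (f : X ⟶ X') (f' : X' ⟶ X'')
    (g : Y ⟶ Y') (g' : Y' ⟶ Y'') (h : S.t X'' Y'' ⟶ W) :
    S.tmap f g ≫ S.tmap f' g' ≫ h = S.tmap (f ≫ f') (g ≫ g') ≫ h := by
  rw [← Category.assoc, tmap_comp_tmap]

lemma tmap_comp_id {X X' X'' : V} (f : X ⟶ X') (f' : X' ⟶ X'') (Y : V) :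
    S.tmap (f ≫ f') (𝟙 Y) = S.tmap f (𝟙 Y) ≫ S.tmap f' (𝟙 Y) := by
  rw [← S.tmap_comp, Category.comp_id]

lemma γ_inv_nat {X X' Y Y' Z Z' : V} (f : X ⟶ X') (g : Y ⟶ Y') (h : Z ⟶ Z') :
    S.tmap f (S.tmap g h) ≫ (S.γ X' Y' Z').inv = (S.γ X Y Z).inv ≫ S.tmap (S.tmap f g) h := by
  rw [Iso.comp_inv_eq, Category.assoc, S.γ_nat, Iso.inv_hom_id_assoc]

lemma γ_inv_comp_tmap_id {X Y Z Z' : V} (h : Z ⟶ Z') :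
    (S.γ X Y Z).inv ≫ S.tmap (𝟙 (S.t X Y)) h
      = S.tmap (𝟙 X) (S.tmap (𝟙 Y) h) ≫ (S.γ X Y Z').inv := by
  simpa only [S.tmap_id] using (S.γ_inv_nat (𝟙 X) (𝟙 Y) h).symm

lemma γ_inv_comp_tmap_tmap_id {X Y Y' Z : V} (h : Y ⟶ Y') :
    (S.γ X Y Z).inv ≫ S.tmap (S.tmap (𝟙 X) h) (𝟙 Z)
      = S.tmap (𝟙 X) (S.tmap h (𝟙 Z)) ≫ (S.γ X Y' Z).inv :=
  (S.γ_inv_nat (𝟙 X) h (𝟙 Z)).symm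

lemma ℓ_inv_nat {X Y : V} (f : X ⟶ Y) :
    S.tmap f (𝟙 S.I) ≫ (S.ℓ Y).inv = (S.ℓ X).inv ≫ S.tmap (𝟙 S.I) f := by
  rw [Iso.comp_inv_eq, Category.assoc, S.ℓ_nat, Iso.inv_hom_id_assoc]

lemma pentagon_inv (W X Y Z : V) :
    (S.γ W X (S.t Y Z)).inv ≫ (S.γ (S.t W X) Y Z).inv
      = S.tmap (𝟙 W) (S.γ X Y Z).inv ≫ (S.γ W (S.t X Y) Z).inv
        ≫ S.tmap (S.γ W X Y).inv (𝟙 Z) := by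
  rw [← cancel_epi ((S.γ (S.t W X) Y Z).hom ≫ (S.γ W X (S.t Y Z)).hom)]
  conv_rhs => rw [← S.pentagon]
  simp only [Category.assoc, Iso.hom_inv_id, Iso.hom_inv_id_assoc, tmap_comp_tmap_assoc,
    tmap_comp_tmap, Category.comp_id, S.tmap_id, Category.id_comp]

lemma tmap_id_ω_comp_ℓ (X Y : V) :
    S.tmap (𝟙 X) (S.ω Y ≫ (S.ℓ Y).hom) ≫ (S.γ X Y S.I).inv
      = S.ω (S.t X Y) ≫ (S.ℓ (S.t X Y)).hom := by
  have ℓ_assoc' : (S.γ S.I X Y).hom ≫ (S.ℓ (S.t X Y)).hom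
      = S.tmap (S.ℓ X).hom (𝟙 Y) ≫ (S.γ X S.I Y).hom ≫ S.tmap (𝟙 X) (S.ℓ Y).hom
        ≫ (S.γ X Y S.I).inv := by
    simp only [← Category.assoc, Iso.eq_comp_inv]
    simpa only [Category.assoc] using S.ℓ_assoc X Y
  rw [← S.ω_right X Y]
  simp only [Category.assoc, ℓ_assoc', tmap_comp_tmap_assoc, Iso.inv_hom_id, Category.id_comp,
    Iso.inv_hom_id_assoc, S.tmap_id, Category.comp_id]

lemma tmap_id_ω_comp_γ_inv (X Y : V) :
    S.tmap (𝟙 X) (S.ω Y) ≫ (S.γ X S.I Y).inv ≫ S.tmap (S.ℓ X).inv (𝟙 Y)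
      = S.tmap (S.ω X) (𝟙 Y) := by
  rw [← cancel_mono (S.γ S.I X Y).hom, S.ω_left]
  simpa only [Category.assoc] using S.ω_right X Y

variable {C : V} (Δ : C ⟶ S.t C C) (ε : C ⟶ S.I)

lemma dhat_naturality {X X' : V} (f : X ⟶ X') :
    S.tmap f (𝟙 C) ≫ dhat S Δ X' = dhat S Δ X ≫ S.tmap (S.tmap f (𝟙 C)) (𝟙 C) := by
  simp only [dhat, Category.assoc, ← γ_inv_nat, tmap_comp_tmap_assoc, Category.id_comp,
    Category.comp_id, S.tmap_id]

lemma that_naturality {X X' : V} (f : X ⟶ X') :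
    S.tmap f (𝟙 C) ≫ that S ε X' = that S ε X ≫ S.tmap (𝟙 S.I) f := by
  simp only [that, Category.assoc, ← ℓ_inv_nat, tmap_comp_tmap_assoc, Category.id_comp,
    Category.comp_id]

lemma dhat_coassoc
    (hcoassoc : Δ ≫ S.tmap Δ (𝟙 C) ≫ (S.γ C C C).hom = Δ ≫ S.tmap (𝟙 C) Δ) (X : V) :
    dhat S Δ X ≫ dhat S Δ (S.t X C) = dhat S Δ X ≫ S.tmap (dhat S Δ X) (𝟙 C) := by
  have hcoassoc' : Δ ≫ S.tmap (𝟙 C) Δ ≫ (S.γ C C C).inv = Δ ≫ S.tmap Δ (𝟙 C) := by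
    rw [← Category.assoc, Iso.comp_inv_eq, ← hcoassoc, Category.assoc]
  calc dhat S Δ X ≫ dhat S Δ (S.t X C)
      = S.tmap (𝟙 X) (Δ ≫ S.tmap (𝟙 C) Δ ≫ (S.γ C C C).inv) ≫ (S.γ X (S.t C C) C).inv
          ≫ S.tmap (S.γ X C C).inv (𝟙 C) := by
        simp only [dhat, Category.assoc, reassoc_of% γ_inv_comp_tmap_id, pentagon_inv,
          tmap_comp_tmap_assoc, Category.id_comp]
    _ = S.tmap (𝟙 X) (Δ ≫ S.tmap Δ (𝟙 C)) ≫ (S.γ X (S.t C C) C).inv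
          ≫ S.tmap (S.γ X C C).inv (𝟙 C) := by rw [hcoassoc']
    _ = dhat S Δ X ≫ S.tmap (dhat S Δ X) (𝟙 C) := by
        rw [dhat, tmap_comp_id, Category.assoc, reassoc_of% γ_inv_comp_tmap_tmap_id,
          tmap_comp_tmap_assoc, Category.id_comp]

lemma dhat_comp_that
    (hcounit_r : Δ ≫ S.tmap (𝟙 C) ε = S.ω C ≫ (S.ℓ C).hom) (X : V) :
    dhat S Δ X ≫ that S ε (S.t X C) = S.ω (S.t X C) := by
  simp only [dhat, that, Category.assoc, reassoc_of% γ_inv_comp_tmap_id, tmap_comp_tmap_assoc,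
    hcounit_r, reassoc_of% tmap_id_ω_comp_ℓ, Iso.hom_inv_id, Category.comp_id]

lemma dhat_comp_tmap_that (hcounit_l : Δ ≫ S.tmap ε (𝟙 C) = S.ω C) (X : V) :
    dhat S Δ X ≫ S.tmap (that S ε X) (𝟙 C) = S.tmap (S.ω X) (𝟙 C) := by
  rw [dhat, that, tmap_comp_id, Category.assoc, reassoc_of% γ_inv_comp_tmap_tmap_id,
    tmap_comp_tmap_assoc, Category.id_comp, hcounit_l, tmap_id_ω_comp_γ_inv]

end SSM

/-- For a semicomonoid `(C, Δ, ε)` in a semiunital semimonoidal category,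
`(− • C, Δ̂, ω, θ̂; J)` is a `J`-comonad (with `J = I • −`): `Δ̂` and `θ̂` are
natural and satisfy the coassociativity and semicounit laws. -/
theorem semicomonoid_gives_JComonad (S : SSM V) (C : V)
    (Δ : C ⟶ S.t C C) (ε : C ⟶ S.I)
    (hcoassoc : Δ ≫ S.tmap Δ (𝟙 C) ≫ (S.γ C C C).hom = Δ ≫ S.tmap (𝟙 C) Δ)
    (hcounit_l : Δ ≫ S.tmap ε (𝟙 C) = S.ω C)
    (hcounit_r : Δ ≫ S.tmap (𝟙 C) ε = S.ω C ≫ (S.ℓ C).hom) :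
    -- naturality of `Δ̂`
    (∀ (X X' : V) (f : X ⟶ X'),
      S.tmap f (𝟙 C) ≫ dhat S Δ X' = dhat S Δ X ≫ S.tmap (S.tmap f (𝟙 C)) (𝟙 C)) ∧
    -- naturality of `θ̂`
    (∀ (X X' : V) (f : X ⟶ X'),
      S.tmap f (𝟙 C) ≫ that S ε X' = that S ε X ≫ S.tmap (𝟙 S.I) f) ∧
    -- coassociativity: `Δ̂C ∘ Δ̂ = CΔ̂ ∘ Δ̂`
    (∀ X : V, dhat S Δ X ≫ dhat S Δ (S.t X C) = dhat S Δ X ≫ S.tmap (dhat S Δ X) (𝟙 C)) ∧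
    -- semicounit law `θ̂C ∘ Δ̂ = ωC`
    (∀ X : V, dhat S Δ X ≫ that S ε (S.t X C) = S.ω (S.t X C)) ∧
    -- semicounit law `Cθ̂ ∘ Δ̂ = Cω`
    (∀ X : V, dhat S Δ X ≫ S.tmap (that S ε X) (𝟙 C) = S.tmap (S.ω X) (𝟙 C)) :=
  ⟨fun _ _ => S.dhat_naturality Δ, fun _ _ => S.that_naturality ε, S.dhat_coassoc Δ hcoassoc,
    S.dhat_comp_that Δ ε hcounit_r, S.dhat_comp_tmap_that Δ ε hcounit_l⟩
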